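/- Suppose A₊, A₋ : ℝ → ℝ are differentiable with G₊ := A₊' + (ω/2)A₋ = 0 and G₋ := A₋' - (ω/2)A₊ = 0. Then for any real constants C₁,…,C₈, the eight functions μⁱⱼₖ defined by μ¹₁₁ = C₅A₋ + C₆A₊ + C₇D₋ + C₈D₊, μ¹₁₂ = C₁A₊ + C₂A₋ - C₇D₊ + C₈D₋, μ¹₂₁ = -C₁A₊ - C₂A₋ - C₃A₊ - C₄A₋ - C₅A₊ + C₆A₋ - C₇D₊ + C₈D₋, μ¹₂₂ = -C₃A₋ + C₄A₊ - C₇D₋ - C₈D₊, μ²₁₁ = C₃A₊ + C₄A₋ - C₇D₊ + C₈D₋, μ²₁₂ = C₁A₋ - C₂A₊ + C₃A₋ - C₄A₊ + C₅A₋ + C₆A₊ - C₇D₋ - C₈D₊, μ²₂₁ = -C₁A₋ + C₂A₊ - C₇D₋ - C₈D₊, μ²₂₂ = -C₅A₊ + C₆A₋ + C₇D₊ - C₈D₋ (where D₊ = (A₊/2)(A₊² - 3A₋²), D₋ = (A₋/2)(3A₊² - A₋²)) satisfy the operadic Lax equations: μ̇¹₁₁ = -(ω/2)(μ²₁₁ +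 μ¹₂₁ + μ¹₁₂), μ̇²₁₁ = (ω/2)(μ¹₁₁ - μ²₂₁ - μ²₁₂), μ̇¹₁₂ = -(ω/2)(μ²₁₂ + μ¹₂₂ - μ¹₁₁), μ̇²₁₂ = (ω/2)(μ¹₁₂ - μ²₂₂ + μ²₁₁), μ̇¹₂₁ = -(ω/2)(μ²₂₁ - μ¹₁₁ + μ¹₂₂), μ̇²₂₁ = (ω/2)(μ¹₂₁ + μ²₁₁ - μ²₂₂), μ̇¹₂₂ = -(ω/2)(μ²₂₂ - μ¹₁₂ - μ¹₂₁), μ̇²₂₂ = (ω/2)(μ¹₂₂ + μ²₁₂ + μ²₂₁). -/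

import Mathlib

/-!
The pair `(A₊, A₋)` is the real form of `z = A₊ + i A₋`, which solves `z' = i (ω/2) z`, and
`(D₊, D₋)` is the real form of `z³ / 2`, which therefore solves `w' = i (3ω/2) w`. Every `μⁱⱼₖ` is
a real linear combination of these two rotating pairs, so its derivative is the same combination
with each pair rotated by a quarter turn; each Lax equation is then a linear identity in the
constants `Cᵢ`.
-/

/-- `(x, y)` is the real form of a solution of `z' = i k z`. -/
def IsRotating (k : ℝ) (x y : ℝ → ℝ) : Prop :=
  ∀ t, HasDerivAt x (-k * y t) t ∧ HasDerivAt y (k * x t) t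

namespace IsRotating

variable {k l : ℝ} {x y u v : ℝ → ℝ}

theorem cube (h : IsRotating k x y)
    (hu : ∀ t, u t = x t / 2 * (x t ^ 2 - 3 * y t ^ 2))
    (hv : ∀ t, v t = y t / 2 * (3 * x t ^ 2 - y t ^ 2)) :
    IsRotating (3 * k) u v := by
  obtain rfl : u = _ := funext hu
  obtain rfl : v = _ := funext hv
  intro t
  obtain ⟨hx, hy⟩ := h t
  constructor
  · exact ((hx.div_const 2).fun_mul
      ((hx.fun_pow 2).fun_sub ((hy.fun_pow 2).const_mul 3))).congr_deriv (by ring)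
  · exact ((hy.div_const 2).fun_mul
      (((hx.fun_pow 2).const_mul 3).fun_sub (hy.fun_pow 2))).congr_deriv (by ring)

theorem hasDerivAt_linearCombination (hxy : IsRotating k x y) (huv : IsRotating l u v)
    (a b c d : ℝ) {f : ℝ → ℝ} (hf : ∀ t, f t = a * x t + b * y t + c * u t + d * v t) (t : ℝ) :
    HasDerivAt f (a * (-k * y t) + b * (k * x t) + c * (-l * v t) + d * (l * u t)) t := by
  obtain rfl : f = _ := funext hf
  exact ((((hxy t).1.const_mul a).add ((hxy t).2.const_mul b)).add
    ((huv t).1.const_mul c)).add ((huv t).2.const_mul d)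

end IsRotating

theorem stmt_8 (ω : ℝ) (Ap Am Dp Dm : ℝ → ℝ)
    (hAp : ∀ t, HasDerivAt Ap (-(ω / 2) * Am t) t)
    (hAm : ∀ t, HasDerivAt Am ((ω / 2) * Ap t) t)
    (hDp : ∀ t, Dp t = (Ap t / 2) * (Ap t ^ 2 - 3 * Am t ^ 2))
    (hDm : ∀ t, Dm t = (Am t / 2) * (3 * Ap t ^ 2 - Am t ^ 2))
    (C₁ C₂ C₃ C₄ C₅ C₆ C₇ C₈ : ℝ)
    (μ111 μ112 μ121 μ122 μ211 μ212 μ221 μ222 : ℝ → ℝ)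
    (h111 : ∀ t, μ111 t = C₅ * Am t + C₆ * Ap t + C₇ * Dm t + C₈ * Dp t)
    (h112 : ∀ t, μ112 t = C₁ * Ap t + C₂ * Am t - C₇ * Dp t + C₈ * Dm t)
    (h121 : ∀ t, μ121 t = -C₁ * Ap t - C₂ * Am t - C₃ * Ap t - C₄ * Am t
      - C₅ * Ap t + C₆ * Am t - C₇ * Dp t + C₈ * Dm t)
    (h122 : ∀ t, μ122 t = -C₃ * Am t + C₄ * Ap t - C₇ * Dm t - C₈ * Dp t)
    (h211 : ∀ t, μ211 t = C₃ * Ap t + C₄ * Am t - C₇ * Dp t + C₈ * Dm t)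
    (h212 : ∀ t, μ212 t = C₁ * Am t - C₂ * Ap t + C₃ * Am t - C₄ * Ap t
      + C₅ * Am t + C₆ * Ap t - C₇ * Dm t - C₈ * Dp t)
    (h221 : ∀ t, μ221 t = -C₁ * Am t + C₂ * Ap t - C₇ * Dm t - C₈ * Dp t)
    (h222 : ∀ t, μ222 t = -C₅ * Ap t + C₆ * Am t + C₇ * Dp t - C₈ * Dm t) :
    ∀ t : ℝ,
      HasDerivAt μ111 (-(ω / 2) * (μ211 t + μ121 t + μ112 t)) t ∧
      HasDerivAt μ211 ((ω / 2) * (μ111 t - μ221 t - μ212 t)) t ∧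
      HasDerivAt μ112 (-(ω / 2) * (μ212 t + μ122 t - μ111 t)) t ∧
      HasDerivAt μ212 ((ω / 2) * (μ112 t - μ222 t + μ211 t)) t ∧
      HasDerivAt μ121 (-(ω / 2) * (μ221 t - μ111 t + μ122 t)) t ∧
      HasDerivAt μ221 ((ω / 2) * (μ121 t + μ211 t - μ222 t)) t ∧
      HasDerivAt μ122 (-(ω / 2) * (μ222 t - μ112 t - μ121 t)) t ∧
      HasDerivAt μ222 ((ω / 2) * (μ122 t + μ212 t + μ221 t)) t := by
  have hA : IsRotating (ω / 2) Ap Am := fun t => ⟨hAp t, hAm t⟩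
  have hD : IsRotating (3 * (ω / 2)) Dp Dm := hA.cube hDp hDm
  intro t
  have hμ := fun a b c d f hf => hA.hasDerivAt_linearCombination hD a b c d (f := f) hf t
  refine ⟨?_, ?_, ?_, ?_, ?_, ?_, ?_, ?_⟩
  · refine (hμ C₆ C₅ C₈ C₇ μ111 fun s => by rw [h111]; ring).congr_deriv ?_
    rw [h211, h121, h112]; ring
  · refine (hμ C₃ C₄ (-C₇) C₈ μ211 fun s => by rw [h211]; ring).congr_deriv ?_
    rw [h111, h221, h212]; ring
  · refine (hμ C₁ C₂ (-C₇) C₈ μ112 fun s => by rw [h112]; ring).congr_deriv ?_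
    rw [h212, h122, h111]; ring
  · refine (hμ (-C₂ - C₄ + C₆) (C₁ + C₃ + C₅) (-C₈) (-C₇) μ212
      fun s => by rw [h212]; ring).congr_deriv ?_
    rw [h112, h222, h211]; ring
  · refine (hμ (-C₁ - C₃ - C₅) (-C₂ - C₄ + C₆) (-C₇) C₈ μ121
      fun s => by rw [h121]; ring).congr_deriv ?_
    rw [h221, h111, h122]; ring
  · refine (hμ C₂ (-C₁) (-C₈) (-C₇) μ221 fun s => by rw [h221]; ring).congr_deriv ?_
    rw [h121, h211, h222]; ring
  · refine (hμ C₄ (-C₃) (-C₈) (-C₇) μ122 fun s => by rw [h122]; ring).congr_deriv ?_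
    rw [h222, h112, h121]; ring
  · refine (hμ (-C₅) C₆ C₇ (-C₈) μ222 fun s => by rw [h222]; ring).congr_deriv ?_
    rw [h122, h212, h221]; ring
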